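/- For a positive integer n, define the q-Sun polynomial g_n(x;q) = sum_{k=0}^{n} [n choose k]_q^2 * [2k choose k]_q * x^k in Z[q][x]. Then for every even divisor d of n, the cyclotomic polynomial Phi_d(q) divides every coefficient (as a polynomial in q) of sum_{k=0}^{n-1} q^k * g_k(x;q). -/

import Mathlib

open Polynomial Finset

/-- The Gaussian binomial coefficient `[n choose k]_q` as a polynomial in `ℤ[q]`,
defined via the `q`-Pascal recurrence `[n+1, k+1]_q = [n, k]_q + q^(k+1) [n, k+1]_q`. -/
noncomputable def qbinom : ℕ → ℕ → Polynomial ℤ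
  | _, 0 => 1
  | 0, _ + 1 => 0
  | n + 1, k + 1 => qbinom n k + Polynomial.X ^ (k + 1) * qbinom n (k + 1)

/-- The coefficient of `x^j` in `∑_{k=0}^{n-1} q^k g_k(x;q)`, where
`g_k(x;q) = ∑_j [k choose j]_q^2 [2j choose j]_q x^j`. -/
noncomputable def sumCoeff (n j : ℕ) : Polynomial ℤ :=
  ∑ k ∈ Finset.range n, Polynomial.X ^ k * (qbinom k j) ^ 2 * qbinom (2 * j) j

/-!
Evaluate at a primitive `d`-th root of unity `ζ`. For `i < d`, `[k, i]_ζ = P_i(ζ^k)` for a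
polynomial `P_i` of degree `≤ i`; hence it is `d`-periodic in `k`, and the `q`-Lucas theorem
`[m d + k, s d + r]_ζ = (m choose s) [k, r]_ζ` (`k, r < d`) follows. Write `j = s d + r`.
If `2 r ≥ d`, Lucas kills the factor `[2 j, j]_ζ`. Otherwise `2 r + 2 ≤ d` because `d` is
even, and by Lucas the sum over `k < m d` is a combination of copies of
`∑_{k < d} ζ^k [k, r]_ζ^2 = ∑_{y^d = 1} y P_r(y)^2`, which vanishes because `y P_r(y)^2` has
degree `< d` and no constant term, while `∑_{y^d = 1} y^e = 0` for `0 < e < d`. Finally, `Φ_d`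
is the minimal polynomial of `ζ` over `ℤ`.
-/

lemma qbinom_zero_right (n : ℕ) : qbinom n 0 = 1 := by cases n <;> rfl

lemma qbinom_succ_succ (n k : ℕ) :
    qbinom (n + 1) (k + 1) = qbinom n k + X ^ (k + 1) * qbinom n (k + 1) := rfl

lemma qbinom_eq_zero_of_lt {n k : ℕ} (h : n < k) : qbinom n k = 0 := by
  induction n generalizing k with
  | zero => obtain ⟨k, rfl⟩ := Nat.exists_eq_succ_of_ne_zero h.ne'; rfl
  | succ n ih =>
    obtain ⟨k, rfl⟩ := Nat.exists_eq_succ_of_ne_zero (Nat.ne_zero_of_lt h)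
    rw [qbinom_succ_succ, ih (by omega), ih (by omega), mul_zero, add_zero]

lemma qbinom_self (n : ℕ) : qbinom n n = 1 := by
  induction n with
  | zero => rfl
  | succ n ih =>
    rw [qbinom_succ_succ, ih, qbinom_eq_zero_of_lt n.lt_succ_self, mul_zero, add_zero]

-- For `n ≤ k` the truncated `n - k` is harmless: both sides vanish.
lemma X_pow_sub_one_mul_qbinom_succ (n k : ℕ) :
    (X ^ (k + 1) - 1) * qbinom n (k + 1) = (X ^ (n - k) - 1) * qbinom n k := by
  induction n generalizing k with
  | zero => simp [qbinom_eq_zero_of_lt]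
  | succ n ih =>
    cases k with
    | zero =>
      have h := ih 0
      rw [Nat.sub_zero, qbinom_zero_right] at h
      rw [qbinom_succ_succ, qbinom_zero_right, Nat.sub_zero, qbinom_zero_right]
      linear_combination X * h
    | succ k =>
      obtain hkn | hnk := Nat.lt_or_ge k n
      · obtain ⟨e, he⟩ : ∃ e, n - k = e + 1 := ⟨n - k - 1, by omega⟩
        have ih' := ih (k + 1)
        rw [show n - (k + 1) = e by omega] at ih'
        rw [qbinom_succ_succ n (k + 1), qbinom_succ_succ n k,
          show n + 1 - (k + 1) = e + 1 by omega]
        linear_combination (ih k).trans (by rw [he]) + X ^ (k + 2) * ih'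
      · rw [qbinom_eq_zero_of_lt (by omega : n + 1 < k + 2), show n + 1 - (k + 1) = 0 by omega]
        simp

lemma aeval_qbinom_succ_succ {R : Type*} [CommRing R] (x : R) (n k : ℕ) :
    aeval x (qbinom (n + 1) (k + 1)) =
      aeval x (qbinom n k) + x ^ (k + 1) * aeval x (qbinom n (k + 1)) := by
  simp [qbinom_succ_succ]

lemma sum_range_mul_eq_sum_sum {M : Type*} [AddCommMonoid M] (f : ℕ → M) (m d : ℕ) :
    ∑ k ∈ range (m * d), f k = ∑ t ∈ range m, ∑ k ∈ range d, f (t * d + k) := by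
  induction m with
  | zero => simp
  | succ m ih => rw [add_mul, one_mul, sum_range_add, ih, sum_range_succ]

lemma IsPrimitiveRoot.sum_eval_pow_eq_zero {R : Type*} [CommRing R] [IsDomain R] {ζ : R}
    {d : ℕ} (hζ : IsPrimitiveRoot ζ d) {P : R[X]} (hP : P.natDegree < d) (hP0 : P.coeff 0 = 0) :
    ∑ k ∈ range d, P.eval (ζ ^ k) = 0 := by
  simp only [eval_eq_sum_range' hP]
  rw [sum_comm]
  refine sum_eq_zero fun e he => ?_
  rcases e with _ | e
  · simp [hP0]
  · have hne : 1 - ζ ^ (e + 1) ≠ 0 :=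
      sub_ne_zero.mpr (hζ.pow_ne_one_of_pos_of_lt e.succ_ne_zero (mem_range.mp he)).symm
    have hgeom : ∑ k ∈ range d, (ζ ^ (e + 1)) ^ k = 0 := by
      refine (mul_eq_zero.mp ?_).resolve_left hne
      rw [mul_neg_geom_sum, pow_right_comm, hζ.pow_eq_one, one_pow, sub_self]
    simp_rw [← mul_sum, pow_right_comm ζ _ (e + 1), hgeom, mul_zero]

section PrimitiveRoot

variable {K : Type*} [Field K] {d : ℕ} {ζ : K}

lemma IsPrimitiveRoot.exists_natDegree_le_aeval_qbinom_eq_eval (hζ : IsPrimitiveRoot ζ d)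
    {i : ℕ} (hi : i < d) :
    ∃ P : K[X], P.natDegree ≤ i ∧ ∀ k, aeval ζ (qbinom k i) = P.eval (ζ ^ k) := by
  induction i with
  | zero => exact ⟨1, by simp, fun k => by simp [qbinom_zero_right]⟩
  | succ i ih =>
    obtain ⟨P, hdeg, hP⟩ := ih (by omega)
    have hζ0 : ζ ≠ 0 := hζ.ne_zero (by omega)
    have hne : ζ ^ (i + 1) - 1 ≠ 0 :=
      sub_ne_zero.mpr (hζ.pow_ne_one_of_pos_of_lt (by omega) hi)
    refine ⟨C (ζ ^ (i + 1) - 1)⁻¹ * (C (ζ ^ i)⁻¹ * X - 1) * P, ?_, fun k => ?_⟩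
    · refine natDegree_mul_le.trans (add_le_add ?_ hdeg) |>.trans (by omega : 1 + i ≤ i + 1)
      compute_degree!
    · have key := congrArg (aeval ζ) (X_pow_sub_one_mul_qbinom_succ k i)
      simp only [map_mul, map_sub, map_pow, aeval_X, map_one] at key
      simp only [eval_mul, eval_C, eval_sub, eval_X, eval_one, ← hP]
      obtain hik | hki := le_or_gt i k
      · rw [pow_sub₀ ζ hζ0 hik] at key
        rw [mul_assoc, eq_inv_mul_iff_mul_eq₀ hne, key]
        ring
      · rw [qbinom_eq_zero_of_lt hki, qbinom_eq_zero_of_lt (by omega : k < i + 1)]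
        simp

lemma IsPrimitiveRoot.aeval_qbinom_add_self (hζ : IsPrimitiveRoot ζ d) {i : ℕ} (hi : i < d)
    (k : ℕ) : aeval ζ (qbinom (k + d) i) = aeval ζ (qbinom k i) := by
  obtain ⟨P, -, hP⟩ := hζ.exists_natDegree_le_aeval_qbinom_eq_eval hi
  rw [hP, hP, pow_add, hζ.pow_eq_one, mul_one]

lemma IsPrimitiveRoot.aeval_qbinom_add_self_add_self (hζ : IsPrimitiveRoot ζ d) (hd : 0 < d)
    (n j : ℕ) :
    aeval ζ (qbinom (n + d) (j + d)) = aeval ζ (qbinom n (j + d)) + aeval ζ (qbinom n j) := by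
  induction n generalizing j with
  | zero =>
    rcases j with _ | j
    · simp [qbinom_self, qbinom_eq_zero_of_lt hd]
    · rw [zero_add, qbinom_eq_zero_of_lt (by omega : d < j + 1 + d),
        qbinom_eq_zero_of_lt (by omega : 0 < j + 1 + d), qbinom_eq_zero_of_lt j.succ_pos]
      simp
  | succ n ih =>
    obtain ⟨e, rfl⟩ : ∃ e, d = e + 1 := ⟨d - 1, by omega⟩
    rw [show n + 1 + (e + 1) = n + (e + 1) + 1 by ring]
    rcases j with _ | j
    · have h0 := ih 0
      rw [zero_add] at h0 ⊢
      rw [aeval_qbinom_succ_succ ζ (n + (e + 1)) e, aeval_qbinom_succ_succ ζ n e,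
        hζ.aeval_qbinom_add_self e.lt_succ_self, h0, hζ.pow_eq_one, qbinom_zero_right,
        qbinom_zero_right]
      simp only [map_one]
      ring
    · rw [show j + 1 + (e + 1) = j + (e + 1) + 1 by ring,
        aeval_qbinom_succ_succ ζ (n + (e + 1)) (j + (e + 1)),
        aeval_qbinom_succ_succ ζ n (j + (e + 1)), aeval_qbinom_succ_succ ζ n j, ih j,
        show j + (e + 1) + 1 = j + 1 + (e + 1) by ring, ih (j + 1), pow_add ζ (j + 1),
        hζ.pow_eq_one]
      ring

lemma IsPrimitiveRoot.aeval_qbinom_lucas (hζ : IsPrimitiveRoot ζ d) (hd : 0 < d) (m s : ℕ)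
    {k r : ℕ} (hk : k < d) (hr : r < d) :
    aeval ζ (qbinom (m * d + k) (s * d + r)) = m.choose s * aeval ζ (qbinom k r) := by
  induction m generalizing s with
  | zero =>
    rcases s with _ | s
    · simp
    · rw [qbinom_eq_zero_of_lt (by nlinarith), Nat.choose_zero_succ]
      simp
  | succ m ih =>
    rw [show (m + 1) * d + k = m * d + k + d by ring]
    rcases s with _ | s
    · rw [zero_mul, zero_add, hζ.aeval_qbinom_add_self hr, ← zero_add r, ← zero_mul d, ih]
      simp
    · rw [show (s + 1) * d + r = s * d + r + d by ring, hζ.aeval_qbinom_add_self_add_self hd,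
        show s * d + r + d = (s + 1) * d + r by ring, ih, ih, Nat.choose_succ_succ']
      push_cast
      ring

lemma IsPrimitiveRoot.sum_pow_mul_aeval_qbinom_sq_eq_zero (hζ : IsPrimitiveRoot ζ d) {r : ℕ}
    (hr : 2 * r + 2 ≤ d) : ∑ k ∈ range d, ζ ^ k * aeval ζ (qbinom k r) ^ 2 = 0 := by
  obtain ⟨P, hdeg, hP⟩ := hζ.exists_natDegree_le_aeval_qbinom_eq_eval (by omega : r < d)
  have hXP : (X * P ^ 2).natDegree < d :=
    (natDegree_mul_le.trans (add_le_add natDegree_X_le (natDegree_pow_le.trans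
      (Nat.mul_le_mul_left 2 hdeg)))).trans_lt (by omega)
  simpa [hP] using hζ.sum_eval_pow_eq_zero hXP (by simp)

lemma IsPrimitiveRoot.aeval_sumCoeff_mul_eq_zero (hζ : IsPrimitiveRoot ζ d) (hd : 0 < d)
    (hde : Even d) (m j : ℕ) : aeval ζ (sumCoeff (m * d) j) = 0 := by
  obtain ⟨s, r, hr, rfl⟩ : ∃ s r, r < d ∧ j = s * d + r :=
    ⟨j / d, j % d, Nat.mod_lt j hd, by rw [mul_comm]; exact (Nat.div_add_mod j d).symm⟩
  simp only [sumCoeff, map_sum, map_mul, map_pow, aeval_X, ← sum_mul]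
  obtain hdr | hrd := le_or_gt d (2 * r)
  · obtain ⟨c, hc⟩ : ∃ c, 2 * r = d + c := ⟨2 * r - d, by omega⟩
    refine mul_eq_zero_of_right _ ?_
    rw [show 2 * (s * d + r) = (2 * s + 1) * d + c by rw [mul_add, hc]; ring,
      hζ.aeval_qbinom_lucas hd _ _ (by omega) hr, qbinom_eq_zero_of_lt (by omega : c < r),
      map_zero, mul_zero]
  · have hr2 : 2 * r + 2 ≤ d := by obtain ⟨t, rfl⟩ := hde; omega
    refine mul_eq_zero_of_left ?_ _
    rw [sum_range_mul_eq_sum_sum]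
    refine sum_eq_zero fun t _ => ?_
    calc ∑ k ∈ range d, ζ ^ (t * d + k) * aeval ζ (qbinom (t * d + k) (s * d + r)) ^ 2
        = (t.choose s : K) ^ 2 * ∑ k ∈ range d, ζ ^ k * aeval ζ (qbinom k r) ^ 2 := by
          rw [mul_sum]
          refine sum_congr rfl fun k hk => ?_
          rw [hζ.aeval_qbinom_lucas hd t s (mem_range.mp hk) hr, pow_add, pow_mul',
            hζ.pow_eq_one, one_pow, one_mul]
          ring
      _ = 0 := by rw [hζ.sum_pow_mul_aeval_qbinom_sq_eq_zero hr2, mul_zero]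

end PrimitiveRoot

lemma IsPrimitiveRoot.cyclotomic_dvd_of_aeval_eq_zero {K : Type*} [Field K] [CharZero K]
    {ζ : K} {d : ℕ} (hζ : IsPrimitiveRoot ζ d) (hd : 0 < d) {p : ℤ[X]}
    (hp : aeval ζ p = 0) : cyclotomic d ℤ ∣ p := by
  rw [cyclotomic_eq_minpoly hζ hd]
  exact minpoly.isIntegrallyClosed_dvd (hζ.isIntegral hd) hp

theorem stmt_16_general (n d : ℕ) (hd : d ∣ n) (hde : Even d) (hd0 : 0 < d) :
    ∀ j : ℕ, Polynomial.cyclotomic d ℤ ∣ sumCoeff n j := by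
  intro j
  obtain ⟨m, rfl⟩ := hd
  have hζ := Complex.isPrimitiveRoot_exp d hd0.ne'
  refine hζ.cyclotomic_dvd_of_aeval_eq_zero hd0 ?_
  rw [mul_comm d m]
  exact hζ.aeval_sumCoeff_mul_eq_zero hd0 hde m j

theorem stmt_16 (n d : ℕ) (hn : 0 < n) (hd : d ∣ n) (hde : Even d) (hd0 : 0 < d) :
    ∀ j : ℕ, Polynomial.cyclotomic d ℤ ∣ sumCoeff n j :=
  stmt_16_general n d hd hde hd0
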